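/- Let Γ be a countable discrete group with a measurable action on a probability space (X,ν). Then the action is asymptotically expanding in measure if and only if for every c ∈ (0,1) there exist an increasing sequence (Y_n)_{n∈ℕ} of measurable subsets of X with ν(X ∖ ⋃_n Y_n) = 0 and finite symmetric subsets S_n ⊆ Γ with 1 ∈ S_n such that each Y_n is a domain of (c, S_n)-expansion. -/

import Mathlib

/-!
Iterating the expansion of a finite symmetric `S` amplifies asymptotic expansion: for every
`a > 0` and `t < 1` some `S` pushes every set of measure in `[a, 1/2]` to measure `> t` (grow
past `1/2`, then let the complement shrink by symmetry of `S`). Given `c < 1`, take a set `A`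
of measure `≤ 1/2` that fails to `(c,S)`-expand and is maximal in measure among such sets;
it is small, and `(S·A)ᶜ` is a domain of `(c,S)`-expansion of nearly full measure. Two
domains whose union is nearly conull merge into one: large subsets of the union expand
globally, while a small subset has half of its measure in one of the two domains, where
finitely many expansion steps gain a factor `> 2(1+c)`. Accumulating domains with complements
of measure tending to `0` gives the exhaustion. Conversely, a domain `Y` of `1/2`-expansion
with `8 ν(Yᶜ) ≤ α` makes `X` expand by `1/4` on sets of measure in `[α, 1/2]`: expand `A ∩ Y`
inside `Y`, or, if it fills more than half of `Y`, expand `Y \ S·A` instead.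
-/

open MeasureTheory Set Filter Pointwise

/-- The union `S · A = ⋃ s ∈ S, s • A` of the translates of `A` by elements of the
finite set `S ⊆ Γ`. -/
def finSMul {Γ X : Type*} [Group Γ] [MulAction Γ X] (S : Finset Γ) (A : Set X) : Set X :=
  ⋃ s ∈ S, s • A

/-- `S` is a finite symmetric subset of `Γ` containing the identity. -/
def SymmFin {Γ : Type*} [Group Γ] (S : Finset Γ) : Prop :=
  (1 : Γ) ∈ S ∧ ∀ s ∈ S, s⁻¹ ∈ S

/-- The `S`-boundary `∂_S A = (S·A) \ A`. -/
def finBdry {Γ X : Type*} [Group Γ] [MulAction Γ X] (S : Finset Γ) (A : Set X) : Set X :=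
  finSMul S A \ A

/-- `Y` is a domain of `(c,S)`-expansion: `ν((S·A) ∩ Y) > (1+c)·ν(A)` for every
measurable `A ⊆ Y` with `0 < ν(A) ≤ ν(Y)/2`. -/
def ExpandsOn {Γ X : Type*} [Group Γ] [MulAction Γ X] [MeasurableSpace X]
    (ν : MeasureTheory.Measure X) (Y : Set X) (c : ℝ) (S : Finset Γ) : Prop :=
  ∀ A : Set X, MeasurableSet A → A ⊆ Y → 0 < ν A → ν A ≤ ν Y / 2 →
    (1 + ENNReal.ofReal c) * ν A < ν (finSMul S A ∩ Y)

/-- `Y` is a domain of expansion: `(c,S)`-expansion for some `c > 0` and some finite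
symmetric `S ∋ 1`. -/
def ExpDomain (Γ : Type*) {X : Type*} [Group Γ] [MulAction Γ X] [MeasurableSpace X]
    (ν : MeasureTheory.Measure X) (Y : Set X) : Prop :=
  ∃ c : ℝ, 0 < c ∧ ∃ S : Finset Γ, SymmFin S ∧ ExpandsOn ν Y c S

/-- The `(α,c,S)` asymptotic-expansion estimate on `Y`: `ν((S·A) ∩ Y) > (1+c)·ν(A)` for
every measurable `A ⊆ Y` with `α·ν(Y) ≤ ν(A) ≤ ν(Y)/2`. -/
def AsymExpandsOn {Γ X : Type*} [Group Γ] [MulAction Γ X] [MeasurableSpace X]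
    (ν : MeasureTheory.Measure X) (Y : Set X) (α c : ℝ) (S : Finset Γ) : Prop :=
  ∀ A : Set X, MeasurableSet A → A ⊆ Y → ENNReal.ofReal α * ν Y ≤ ν A → ν A ≤ ν Y / 2 →
    (1 + ENNReal.ofReal c) * ν A < ν (finSMul S A ∩ Y)

/-- `Y` is a domain of asymptotic expansion. -/
def AsymExpDomain (Γ : Type*) {X : Type*} [Group Γ] [MulAction Γ X] [MeasurableSpace X]
    (ν : MeasureTheory.Measure X) (Y : Set X) : Prop :=
  ∀ α : ℝ, 0 < α → α ≤ 1 / 2 →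
    ∃ c : ℝ, 0 < c ∧ ∃ S : Finset Γ, SymmFin S ∧ AsymExpandsOn ν Y α c S

/-- The action of `Γ` on the probability space `(X,ν)` is strongly ergodic: every almost
invariant sequence of measurable sets is asymptotically trivial. -/
def StronglyErgodic (Γ : Type*) {X : Type*} [Group Γ] [MulAction Γ X] [MeasurableSpace X]
    (ν : MeasureTheory.Measure X) : Prop :=
  ∀ C : ℕ → Set X, (∀ n, MeasurableSet (C n)) →
    (∀ γ : Γ, Filter.Tendsto (fun n => ν (symmDiff (C n) (γ • C n))) Filter.atTop (nhds 0)) →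
    Filter.Tendsto (fun n => ν (C n) * (1 - ν (C n))) Filter.atTop (nhds 0)

/-- The action of `Γ` on `(X,ν)` is measure-class-preserving. -/
def MeasClassPres (Γ : Type*) {X : Type*} [Group Γ] [MulAction Γ X] [MeasurableSpace X]
    (ν : MeasureTheory.Measure X) : Prop :=
  ∀ (γ : Γ) (A : Set X), MeasurableSet A → (ν (γ • A) = 0 ↔ ν A = 0)

/-- The action of `Γ` on `(X,ν)` is ergodic: every invariant measurable set is null or
conull. -/
def ErgodicAct (Γ : Type*) {X : Type*} [Group Γ] [MulAction Γ X] [MeasurableSpace X]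
    (ν : MeasureTheory.Measure X) : Prop :=
  ∀ A : Set X, MeasurableSet A → (∀ γ : Γ, γ • A = A) → ν A = 0 ∨ ν Aᶜ = 0

/-- `W` admits an exhaustion by measurable subsets satisfying `P`. -/
def ExhaustionBy {X : Type*} [MeasurableSpace X] (ν : MeasureTheory.Measure X)
    (W : Set X) (P : Set X → Prop) : Prop :=
  ∃ Y : ℕ → Set X, Monotone Y ∧ (∀ n, MeasurableSet (Y n)) ∧ (∀ n, Y n ⊆ W) ∧
    (∀ n, P (Y n)) ∧ ν (W \ ⋃ n, Y n) = 0

open scoped ENNReal Topology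

section finSMul

variable {Γ X : Type*} [Group Γ] [MulAction Γ X]

theorem finSMul_eq_smul (S : Finset Γ) (A : Set X) : finSMul S A = (S : Set Γ) • A :=
  Set.iUnion_smul_set _ _

theorem finSMul_mono {S T : Finset Γ} {A B : Set X} (hST : S ⊆ T) (hAB : A ⊆ B) :
    finSMul S A ⊆ finSMul T B := by
  simpa only [finSMul_eq_smul] using Set.smul_subset_smul (Finset.coe_subset.2 hST) hAB

theorem subset_finSMul {S : Finset Γ} (hS : (1 : Γ) ∈ S) (A : Set X) : A ⊆ finSMul S A :=
  fun x hx => Set.mem_biUnion hS ⟨x, hx, one_smul Γ x⟩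

theorem finSMul_finSMul [DecidableEq Γ] (S T : Finset Γ) (A : Set X) :
    finSMul S (finSMul T A) = finSMul (S * T) A := by
  simp only [finSMul_eq_smul, Finset.coe_mul, mul_smul]

theorem finSMul_union (S : Finset Γ) (A B : Set X) :
    finSMul S (A ∪ B) = finSMul S A ∪ finSMul S B := by
  simp only [finSMul_eq_smul, Set.smul_union]

theorem finSMul_iUnion {ι : Sort*} (S : Finset Γ) (A : ι → Set X) :
    finSMul S (⋃ i, A i) = ⋃ i, finSMul S (A i) := by
  simp only [finSMul_eq_smul, Set.smul_iUnion]

@[simp]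
theorem finSMul_empty (S : Finset Γ) : finSMul S (∅ : Set X) = ∅ := by
  simp [finSMul_eq_smul]

theorem SymmFin.disjoint_finSMul_left {S : Finset Γ} (hS : SymmFin S) {A B : Set X} :
    Disjoint (finSMul S A) B ↔ Disjoint A (finSMul S B) := by
  simp only [finSMul, Set.disjoint_iUnion_left, Set.disjoint_iUnion_right]
  refine ⟨fun h s hs => ?_, fun h s hs => ?_⟩
  · simpa [Set.disjoint_smul_set_right] using h s⁻¹ (hS.2 s hs)
  · simpa [Set.disjoint_smul_set_left] using h s⁻¹ (hS.2 s hs)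

theorem SymmFin.union [DecidableEq Γ] {S T : Finset Γ} (hS : SymmFin S) (hT : SymmFin T) :
    SymmFin (S ∪ T) :=
  ⟨Finset.mem_union_left _ hS.1, fun s hs => (Finset.mem_union.1 hs).elim
    (fun h => Finset.mem_union_left _ (hS.2 s h)) (fun h => Finset.mem_union_right _ (hT.2 s h))⟩

theorem SymmFin.pow [DecidableEq Γ] {S : Finset Γ} (hS : SymmFin S) (n : ℕ) :
    SymmFin (S ^ n) := by
  have hinv : S⁻¹ ⊆ S := fun s hs => by simpa using hS.2 _ (Finset.mem_inv'.1 hs)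
  refine ⟨Finset.one_mem_pow hS.1, fun s hs => ?_⟩
  exact Finset.pow_subset_pow_left hinv (inv_pow S n ▸ Finset.inv_mem_inv hs)

variable [MeasurableSpace X] [MeasurableConstSMul Γ X]

theorem MeasurableSet.finSMul {A : Set X} (hA : MeasurableSet A) (S : Finset Γ) :
    MeasurableSet (finSMul S A) :=
  .biUnion S.countable_toSet fun s _ => hA.const_smul s

end finSMul

theorem ENNReal.exists_lt_pow_mul {κ b β : ℝ≥0∞} (hκ : 1 < κ) (hb : b ≠ ∞) (hβ : β ≠ 0) :
    ∃ n : ℕ, b < κ ^ n * β := by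
  have hlim : Tendsto (fun n : ℕ => κ⁻¹ ^ n) atTop (𝓝 0) :=
    ENNReal.tendsto_pow_atTop_nhds_zero_of_lt_one (ENNReal.inv_lt_one.2 hκ)
  obtain ⟨n, hn⟩ := (hlim.eventually (gt_mem_nhds (ENNReal.div_pos hβ hb))).exists
  refine ⟨n, ?_⟩
  rw [← ENNReal.inv_pow, ENNReal.inv_lt_iff_inv_lt, ENNReal.inv_div (Or.inl hb) (Or.inr hβ)] at hn
  exact (ENNReal.div_lt_iff (Or.inl hβ) (Or.inr hb)).1 hn

theorem ENNReal.one_add_ofReal_lt_two {c : ℝ} (hc : c < 1) : 1 + ENNReal.ofReal c < 2 := by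
  rw [← one_add_one_eq_two]
  exact ENNReal.add_lt_add_left ENNReal.one_ne_top (ENNReal.ofReal_lt_one.2 hc)

theorem ENNReal.one_add_ofReal_div_two_lt_one {c : ℝ} (hc : c < 1) :
    (1 + ENNReal.ofReal c) / 2 < 1 :=
  ENNReal.div_lt_of_lt_mul (by simpa using ENNReal.one_add_ofReal_lt_two hc)

namespace MeasureTheory

variable {X : Type*} [MeasurableSpace X]

theorem exists_forall_superset_measure_le (μ : Measure X) [IsFiniteMeasure μ]
    {P : Set X → Prop} {A₀ : Set X} (h₀ : P A₀)
    (hP : ∀ A : ℕ → Set X, Monotone A → (∀ n, P (A n)) → P (⋃ n, A n)) :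
    ∃ A, P A ∧ ∀ C, P C → A ⊆ C → μ C ≤ μ A := by
  let s : Set X → ℝ≥0∞ := fun A => ⨆ C ∈ {C | P C ∧ A ⊆ C}, μ C
  have hs : ∀ A, P A → ∀ ε : ℝ≥0∞, ε ≠ 0 → ∃ B, P B ∧ A ⊆ B ∧ s A ≤ μ B + ε := by
    intro A hA ε hε
    rcases le_or_gt (s A) ε with hsε | hsε
    · exact ⟨A, hA, subset_rfl, hsε.trans le_add_self⟩
    have hsA : s A ≠ ∞ := ne_top_of_le_ne_top (measure_ne_top μ Set.univ)
      (iSup₂_le fun C _ => measure_mono (Set.subset_univ C))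
    obtain ⟨B, hB, hsB⟩ := lt_biSup_iff.1
      (ENNReal.sub_lt_self hsA (hsε.trans_le' zero_le).ne' hε)
    exact ⟨B, hB.1, hB.2, tsub_le_iff_right.1 hsB.le⟩
  choose! F hFP hFsub hFs using hs
  let A : ℕ → Set X := fun n => Nat.rec A₀ (fun n B => F B (n : ℝ≥0∞)⁻¹) n
  have hAP : ∀ n, P (A n) := fun n => Nat.rec h₀ (fun n ih => hFP _ ih _ (by simp)) n
  have hmono : Monotone A := monotone_nat_of_le_succ fun n => hFsub _ (hAP n) _ (by simp)
  refine ⟨⋃ n, A n, hP A hmono hAP, fun C hC hAC => ?_⟩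
  refine ge_of_tendsto' (by simpa using tendsto_const_nhds.add ENNReal.tendsto_inv_nat_nhds_zero)
    fun n => ?_
  calc μ C ≤ s (A n) := le_biSup (f := μ) ⟨hC, (Set.subset_iUnion A n).trans hAC⟩
    _ ≤ μ (A (n + 1)) + (n : ℝ≥0∞)⁻¹ := hFs _ (hAP n) _ (by simp)
    _ ≤ μ (⋃ n, A n) + (n : ℝ≥0∞)⁻¹ := by gcongr; exact Set.subset_iUnion A (n + 1)

theorem lt_measure_inter_of_lt_measure {μ : Measure X} {U Z : Set X} {x t : ℝ≥0∞}
    (ht : t < μ U) (hxt : x + μ Zᶜ ≤ t) : x < μ (U ∩ Z) := by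
  by_contra! hle
  refine (ht.trans_le ((measure_le_inter_add_sdiff μ U Z).trans ?_)).not_ge hxt
  gcongr
  exact Set.sdiff_subset_compl U Z

end MeasureTheory

section Maximal

variable {Γ X : Type*} [Group Γ] [MulAction Γ X] [MeasurableSpace X]

theorem exists_maximal_measure_finSMul_le_mul (ν : Measure X) [IsFiniteMeasure ν] (S : Finset Γ)
    (κ b : ℝ≥0∞) : ∃ A, (MeasurableSet A ∧ ν A ≤ b ∧ ν (finSMul S A) ≤ κ * ν A) ∧
      ∀ C, (MeasurableSet C ∧ ν C ≤ b ∧ ν (finSMul S C) ≤ κ * ν C) → A ⊆ C → ν C ≤ ν A := by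
  refine exists_forall_superset_measure_le ν ⟨.empty, by simp, by simp⟩ fun A hmono hA => ?_
  refine ⟨.iUnion fun n => (hA n).1, ?_, ?_⟩
  · rw [hmono.measure_iUnion]
    exact iSup_le fun n => (hA n).2.1
  · rw [finSMul_iUnion, Monotone.measure_iUnion fun m n hmn => finSMul_mono le_rfl (hmono hmn),
      hmono.measure_iUnion, ENNReal.mul_iSup]
    exact iSup_mono fun n => (hA n).2.2

end Maximal

section Expansion

variable {Γ X : Type*} [Group Γ] [MulAction Γ X] [DecidableEq Γ] [MeasurableSpace X]
  [MeasurableConstSMul Γ X] {ν : Measure X}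

theorem lt_measure_finSMul_pow {μ : Measure X} {S : Finset Γ} (hS : (1 : Γ) ∈ S) {B : Set X}
    (hB : MeasurableSet B) {κ b : ℝ≥0∞}
    (hexp : ∀ A, MeasurableSet A → B ⊆ A → μ A ≤ b → κ * μ A ≤ μ (finSMul S A)) {n : ℕ}
    (hn : b < κ ^ n * μ B) : b < μ (finSMul (S ^ n) B) := by
  by_contra! hle
  have grow : ∀ k ≤ n, κ ^ k * μ B ≤ μ (finSMul (S ^ k) B) := by
    intro k
    induction k with
    | zero => simp [finSMul_eq_smul]
    | succ k ih =>
      intro hk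
      have hsub : finSMul (S ^ k) B ⊆ finSMul (S ^ n) B :=
        finSMul_mono (Finset.pow_subset_pow_right hS (by omega)) le_rfl
      calc κ ^ (k + 1) * μ B = κ * (κ ^ k * μ B) := by ring
        _ ≤ κ * μ (finSMul (S ^ k) B) := by gcongr; exact ih (by omega)
        _ ≤ μ (finSMul S (finSMul (S ^ k) B)) :=
          hexp _ (hB.finSMul _) (subset_finSMul (Finset.one_mem_pow hS) B)
            ((measure_mono hsub).trans hle)
        _ = μ (finSMul (S ^ (k + 1)) B) := by rw [finSMul_finSMul, pow_succ']
  exact (grow n le_rfl).not_gt (hle.trans_lt hn)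

theorem ExpandsOn.lt_measure_finSMul_pow_inter {Y B : Set X} {c : ℝ} {S : Finset Γ}
    (h : ExpandsOn ν Y c S) (hY : MeasurableSet Y) (hS : (1 : Γ) ∈ S) (hB : MeasurableSet B)
    (hBY : B ⊆ Y) (hB0 : 0 < ν B) {b : ℝ≥0∞} (hb : b ≤ ν Y / 2) {n : ℕ}
    (hn : b < (1 + ENNReal.ofReal c) ^ n * ν B) : b < ν (finSMul (S ^ n) B ∩ Y) := by
  rw [← Measure.restrict_apply' hY]
  refine lt_measure_finSMul_pow (κ := 1 + ENNReal.ofReal c) hS hB (fun A hA hBA hAb => ?_) ?_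
  · simp only [Measure.restrict_apply' hY] at hAb ⊢
    refine (h (A ∩ Y) (hA.inter hY) Set.inter_subset_right
      (hB0.trans_le (measure_mono (Set.subset_inter hBA hBY))) (hAb.trans hb)).le.trans ?_
    gcongr
    exact finSMul_mono le_rfl Set.inter_subset_left
  · rwa [Measure.restrict_apply' hY, Set.inter_eq_left.2 hBY]

variable [IsFiniteMeasure ν]

theorem ExpandsOn.mul_lt_measure_finSMul_pow_inter {W B B' : Set X} {c : ℝ} {R : Finset Γ}
    {k : ℕ} (h : ExpandsOn ν W c R) (hW : MeasurableSet W) (hR : (1 : Γ) ∈ R)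
    (hB' : MeasurableSet B') (hB'W : B' ⊆ W) (hB0 : 0 < ν B) (hBB' : ν B ≤ 2 * ν B')
    (hBW : (1 + ENNReal.ofReal c) * ν B ≤ ν W / 2)
    (hk : (1 + ENNReal.ofReal c) * 2 < (1 + ENNReal.ofReal c) ^ k) :
    (1 + ENNReal.ofReal c) * ν B < ν (finSMul (R ^ k) B' ∩ W) := by
  have hB'0 : ν B' ≠ 0 := fun h0 => hB0.ne' (le_antisymm (by simpa [h0] using hBB') zero_le)
  refine h.lt_measure_finSMul_pow_inter hW hR hB' hB'W (pos_iff_ne_zero.2 hB'0) hBW ?_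
  calc (1 + ENNReal.ofReal c) * ν B ≤ (1 + ENNReal.ofReal c) * 2 * ν B' := by
        rw [mul_assoc]; gcongr
    _ < (1 + ENNReal.ofReal c) ^ k * ν B' :=
        ENNReal.mul_lt_mul_left hB'0 (measure_ne_top ν B') hk

-- `B` has at least half of its measure in `Y` or in `Y'`
theorem ExpandsOn.mul_lt_measure_finSMul_pow_inter_union {Y Y' B : Set X} {c : ℝ}
    {S S' : Finset Γ} {k : ℕ} (hYS : ExpandsOn ν Y c S) (hY'S' : ExpandsOn ν Y' c S')
    (hY : MeasurableSet Y) (hY' : MeasurableSet Y') (hS : (1 : Γ) ∈ S) (hS' : (1 : Γ) ∈ S')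
    (hB : MeasurableSet B) (hBY : B ⊆ Y ∪ Y') (hB0 : 0 < ν B)
    (hBsmall : (1 + ENNReal.ofReal c) * ν B ≤ min (ν Y / 2) (ν Y' / 2))
    (hk : (1 + ENNReal.ofReal c) * 2 < (1 + ENNReal.ofReal c) ^ k) :
    (1 + ENNReal.ofReal c) * ν B < ν (finSMul (S ^ k ∪ S' ^ k) B ∩ (Y ∪ Y')) := by
  have hsplit := measure_le_inter_add_sdiff ν B Y'
  rcases le_total (ν (B \ Y')) (ν (B ∩ Y')) with hY'half | hYhalf
  · refine (hY'S'.mul_lt_measure_finSMul_pow_inter hY' hS' (hB.inter hY') Set.inter_subset_right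
      hB0 (by rw [two_mul]; exact hsplit.trans (by gcongr)) (hBsmall.trans (min_le_right _ _))
      hk).trans_le (measure_mono ?_)
    exact Set.inter_subset_inter (finSMul_mono Finset.subset_union_right Set.inter_subset_left)
      Set.subset_union_right
  · refine (hYS.mul_lt_measure_finSMul_pow_inter hY hS (hB.diff hY')
      (fun x hx => (hBY hx.1).resolve_right hx.2) hB0
      (by rw [two_mul]; exact hsplit.trans (by gcongr)) (hBsmall.trans (min_le_left _ _))
      hk).trans_le (measure_mono ?_)
    exact Set.inter_subset_inter (finSMul_mono Finset.subset_union_left Set.sdiff_subset)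
      Set.subset_union_left

end Expansion

section Amplification

variable {Γ X : Type*} [Group Γ] [MulAction Γ X] [MeasurableSpace X] {ν : Measure X}
  [IsProbabilityMeasure ν]

theorem AsymExpDomain.exists_one_lt_mul_lt_measure_finSMul (h : AsymExpDomain Γ ν Set.univ)
    {a : ℝ≥0∞} (ha : 0 < a) : ∃ κ, 1 < κ ∧ ∃ S : Finset Γ, SymmFin S ∧
      ∀ A, MeasurableSet A → a ≤ ν A → ν A ≤ 1 / 2 → κ * ν A < ν (finSMul S A) := by
  have ha' : min a (1 / 2) ≠ ∞ := ne_top_of_le_ne_top (by simp) (min_le_right _ _)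
  obtain ⟨c, hc, S, hS, hexp⟩ := h (min a (1 / 2)).toReal
    (ENNReal.toReal_pos (lt_min ha (by norm_num)).ne' ha')
    (by simpa using ENNReal.toReal_mono (by simp) (min_le_right a (1 / 2)))
  refine ⟨1 + ENNReal.ofReal c, ENNReal.lt_add_right ENNReal.one_ne_top
    (ENNReal.ofReal_pos.2 hc).ne', S, hS, fun A hA haA hA2 => ?_⟩
  simpa using hexp A hA (Set.subset_univ A)
    (by simpa [ENNReal.ofReal_toReal ha'] using (min_le_left _ _).trans haA) (by simpa using hA2)

variable [DecidableEq Γ] [MeasurableConstSMul Γ X]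

theorem AsymExpDomain.exists_lt_measure_finSMul (h : AsymExpDomain Γ ν Set.univ)
    {a t : ℝ≥0∞} (ha : 0 < a) (ht : t < 1) : ∃ S : Finset Γ, SymmFin S ∧
      ∀ A, MeasurableSet A → a ≤ ν A → ν A ≤ 1 / 2 → t < ν (finSMul S A) := by
  set β := min a (1 - t)
  have hβ : 0 < β := lt_min ha (tsub_pos_of_lt ht)
  obtain ⟨κ, hκ, S, hS, hexp⟩ := h.exists_one_lt_mul_lt_measure_finSMul hβ
  obtain ⟨n, hn⟩ := ENNReal.exists_lt_pow_mul hκ (b := 1 / 2) (by simp) hβ.ne'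
  have grow : ∀ B, MeasurableSet B → β ≤ ν B → 1 / 2 < ν (finSMul (S ^ n) B) :=
    fun B hB hβB => lt_measure_finSMul_pow hS.1 hB
      (fun A hA hBA hA2 => (hexp A hA (hβB.trans (measure_mono hBA)) hA2).le)
      (hn.trans_le (by gcongr))
  refine ⟨S ^ (n + n), hS.pow _, fun A hA haA hA2 => ?_⟩
  set N := finSMul (S ^ n) A
  have hN : MeasurableSet N := hA.finSMul _
  -- `E := (S^n·N)ᶜ` cannot grow past `1/2`, since by symmetry `S^n·E` misses `N`
  have hE : ν (finSMul (S ^ n) N)ᶜ < β := by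
    by_contra! hβE
    have hdisj : Disjoint (finSMul (S ^ n) (finSMul (S ^ n) N)ᶜ) N :=
      (hS.pow n).disjoint_finSMul_left.2 disjoint_compl_left
    have := calc (1 : ℝ≥0∞) = 1 / 2 + 1 / 2 := (ENNReal.add_halves 1).symm
      _ < ν (finSMul (S ^ n) (finSMul (S ^ n) N)ᶜ) + ν N := ENNReal.add_lt_add
        (grow _ (hN.finSMul _).compl hβE) (grow A hA ((min_le_left _ _).trans haA))
      _ = ν (finSMul (S ^ n) (finSMul (S ^ n) N)ᶜ ∪ N) := (measure_union hdisj hN).symm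
      _ ≤ 1 := prob_le_one
    exact this.false
  rw [prob_compl_eq_one_sub (hN.finSMul _)] at hE
  rw [pow_add, ← finSMul_finSMul]
  exact lt_of_tsub_lt_tsub_left (hE.trans_le (min_le_right _ _))

theorem AsymExpDomain.exists_expandsOn_measure_compl_lt (h : AsymExpDomain Γ ν Set.univ)
    {c : ℝ} (hc : c < 1) {δ : ℝ≥0∞} (hδ : 0 < δ) :
    ∃ (Y : Set X) (S : Finset Γ), MeasurableSet Y ∧ SymmFin S ∧ ν Yᶜ < δ ∧
      ExpandsOn ν Y c S := by
  set κ := 1 + ENNReal.ofReal c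
  obtain ⟨ε, hε0, hεlt⟩ := exists_between (lt_min (lt_min hδ (by norm_num : (0 : ℝ≥0∞) < 1 / 2))
    (tsub_pos_of_lt (ENNReal.one_add_ofReal_div_two_lt_one hc)))
  have hεκ : κ / 2 + ε < 1 := lt_tsub_iff_left.1 (hεlt.trans_le (min_le_right _ _))
  have hε2 : ε ≤ 1 / 2 := (hεlt.trans_le ((min_le_left _ _).trans (min_le_right _ _))).le
  obtain ⟨S, hS, hbig⟩ := h.exists_lt_measure_finSMul (ENNReal.half_pos hε0.ne') hεκ
  obtain ⟨A, ⟨hA, hA2, hSA⟩, hmax⟩ := exists_maximal_measure_finSMul_le_mul ν S κ (1 / 2)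
  have hAε : ν A < ε / 2 := by
    by_contra! hεA
    refine (hbig A hA hεA hA2).not_ge (hSA.trans ?_)
    calc κ * ν A ≤ κ * (1 / 2) := by gcongr
      _ ≤ κ / 2 + ε := by rw [mul_one_div]; exact le_self_add
  have hSAε : ν (finSMul S A) ≤ ε := calc
    ν (finSMul S A) ≤ κ * ν A := hSA
    _ ≤ 2 * (ε / 2) := mul_le_mul' (ENNReal.one_add_ofReal_lt_two hc).le hAε.le
    _ = ε := ENNReal.mul_div_cancel two_ne_zero ENNReal.ofNat_ne_top
  refine ⟨(finSMul S A)ᶜ, S, (hA.finSMul S).compl, hS, ?_, fun B hB hBY hB0 hB2 => ?_⟩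
  · rw [compl_compl]
    exact hSAε.trans_lt (hεlt.trans_le ((min_le_left _ _).trans (min_le_left _ _)))
  have hB2' : ν B ≤ 1 / 2 := hB2.trans (ENNReal.div_le_div_right prob_le_one 2)
  rcases le_or_gt (ε / 2) (ν B) with hεB | hεB
  · refine lt_measure_inter_of_lt_measure (hbig B hB hεB hB2') ?_
    rw [compl_compl, ← mul_one_div]
    gcongr
  -- a small non-expanding `B` could be added to `A`, contradicting maximality
  by_contra! hle
  have hAB : ν (A ∪ B) = ν A + ν B :=
    measure_union ((disjoint_compl_right.mono_right hBY).mono_left (subset_finSMul hS.1 A)) hB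
  have hbad : MeasurableSet (A ∪ B) ∧ ν (A ∪ B) ≤ 1 / 2 ∧
      ν (finSMul S (A ∪ B)) ≤ κ * ν (A ∪ B) := by
    refine ⟨hA.union hB, ?_, ?_⟩
    · rw [hAB]
      exact (ENNReal.add_lt_add hAε hεB).le.trans
        ((ENNReal.add_halves ε).trans_le hε2)
    · rw [finSMul_union, hAB, mul_add, ← Set.union_sdiff_self]
      exact (measure_union_le _ _).trans (add_le_add hSA hle)
  exact (ENNReal.lt_add_right (measure_ne_top ν A) hB0.ne').not_ge
    (hAB ▸ hmax _ hbad Set.subset_union_left)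

theorem AsymExpDomain.exists_expandsOn_union (h : AsymExpDomain Γ ν Set.univ) {c : ℝ}
    (hc : 0 < c) (hc1 : c < 1) {Y Y' : Set X} {S S' : Finset Γ} (hY : MeasurableSet Y)
    (hY' : MeasurableSet Y') (hS : SymmFin S) (hS' : SymmFin S') (hY0 : 0 < ν Y)
    (hY'0 : 0 < ν Y') (hYS : ExpandsOn ν Y c S) (hY'S' : ExpandsOn ν Y' c S')
    (hYY' : ν (Y ∪ Y')ᶜ + (1 + ENNReal.ofReal c) / 2 < 1) :
    ∃ T : Finset Γ, SymmFin T ∧ ExpandsOn ν (Y ∪ Y') c T := by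
  set κ := 1 + ENNReal.ofReal c
  have hκ : 1 < κ := ENNReal.lt_add_right ENNReal.one_ne_top (ENNReal.ofReal_pos.2 hc).ne'
  set a := min (ν Y / 2) (ν Y' / 2) / 2
  have ha : 0 < a := ENNReal.half_pos
    (lt_min (ENNReal.half_pos hY0.ne') (ENNReal.half_pos hY'0.ne')).ne'
  obtain ⟨S'', hS'', hbig⟩ := h.exists_lt_measure_finSMul ha hYY'
  obtain ⟨k, hk⟩ := ENNReal.exists_lt_pow_mul hκ (b := κ * 2) (by finiteness) one_ne_zero
  rw [mul_one] at hk
  refine ⟨S ^ k ∪ S' ^ k ∪ S'', ((hS.pow k).union (hS'.pow k)).union hS'',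
    fun B hB hBY hB0 hB2 => ?_⟩
  have hB2' : ν B ≤ 1 / 2 := hB2.trans (ENNReal.div_le_div_right prob_le_one 2)
  rcases le_or_gt a (ν B) with haB | haB
  · refine (lt_measure_inter_of_lt_measure (hbig B hB haB hB2') ?_).trans_le
      (measure_mono (Set.inter_subset_inter_left _ (finSMul_mono Finset.subset_union_right le_rfl)))
    rw [add_comm, ← mul_one_div]
    gcongr
  refine (hYS.mul_lt_measure_finSMul_pow_inter_union hY'S' hY hY' hS.1 hS'.1 hB hBY hB0 ?_
    hk).trans_le
    (measure_mono (Set.inter_subset_inter_left _ (finSMul_mono Finset.subset_union_left le_rfl)))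
  calc κ * ν B ≤ 2 * a := mul_le_mul' (ENNReal.one_add_ofReal_lt_two hc1).le haB.le
    _ = _ := ENNReal.mul_div_cancel two_ne_zero ENNReal.ofNat_ne_top

theorem AsymExpDomain.exists_exhaustion (h : AsymExpDomain Γ ν Set.univ) {c : ℝ} (hc : 0 < c)
    (hc1 : c < 1) :
    ∃ (Yseq : ℕ → Set X) (S : ℕ → Finset Γ), Monotone Yseq ∧ (∀ n, MeasurableSet (Yseq n)) ∧
      ν (Set.univ \ ⋃ n, Yseq n) = 0 ∧
      ∀ n, SymmFin (S n) ∧ 0 < ν (Yseq n) ∧ ExpandsOn ν (Yseq n) c (S n) := by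
  set κ := 1 + ENNReal.ofReal c
  choose Y S hY hS hYc hYS using fun n : ℕ => h.exists_expandsOn_measure_compl_lt hc1
    (lt_min (tsub_pos_of_lt (ENNReal.one_add_ofReal_div_two_lt_one hc1))
      (ENNReal.inv_pos.2 (ENNReal.natCast_ne_top n)))
  have hsmall : ∀ n, ν (Y n)ᶜ + κ / 2 < 1 :=
    fun n => lt_tsub_iff_right.1 ((hYc n).trans_le (min_le_left _ _))
  have hYpos : ∀ n, 0 < ν (Y n) := fun n => by
    have := le_self_add.trans_lt (hsmall n)
    rw [prob_compl_eq_one_sub (hY n), ENNReal.sub_lt_self_iff ENNReal.one_ne_top] at this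
    exact this.2
  have hmeas : ∀ n, MeasurableSet (Set.accumulate Y n) :=
    fun n => .biUnion (Set.to_countable _) fun k _ => hY k
  have hpos : ∀ n, 0 < ν (Set.accumulate Y n) := fun n => (hYpos 0).trans_le
    (measure_mono (Set.subset_accumulate.trans (Set.monotone_accumulate (Nat.zero_le n))))
  have hdom : ∀ n, ∃ T : Finset Γ, SymmFin T ∧ ExpandsOn ν (Set.accumulate Y n) c T := by
    intro n
    induction n with
    | zero => exact ⟨S 0, hS 0, by simpa using hYS 0⟩
    | succ n ih =>
      obtain ⟨T, hT, hYT⟩ := ih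
      rw [Set.accumulate_succ]
      exact h.exists_expandsOn_union hc hc1 (hmeas n) (hY _) hT (hS _) (hpos n) (hYpos _) hYT
        (hYS _) ((hsmall _).trans_le' (by gcongr; exact Set.subset_union_right))
  choose T hT hYT using hdom
  refine ⟨Set.accumulate Y, T, Set.monotone_accumulate, hmeas, ?_,
    fun n => ⟨hT n, hpos n, hYT n⟩⟩
  rw [Set.iUnion_accumulate, ← Set.compl_eq_univ_sdiff]
  refine le_antisymm (ge_of_tendsto' ENNReal.tendsto_inv_nat_nhds_zero fun n => ?_) zero_le
  exact (measure_mono (Set.compl_subset_compl.2 (Set.subset_iUnion Y n))).trans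
    ((hYc n).le.trans (min_le_right _ _))

end Amplification

section Converse

variable {Γ X : Type*} [Group Γ] [MulAction Γ X] [MeasurableSpace X] {ν : Measure X}

theorem ExpandsOn.mul_measureReal_lt [IsFiniteMeasure ν] {Y A : Set X} {c : ℝ} {S : Finset Γ}
    (h : ExpandsOn ν Y c S) (hc : 0 ≤ c) (hA : MeasurableSet A) (hAY : A ⊆ Y)
    (hA0 : 0 < ν.real A) (hA2 : ν.real A ≤ ν.real Y / 2) :
    (1 + c) * ν.real A < ν.real (finSMul S A ∩ Y) := by
  have := h A hA hAY (ENNReal.toReal_pos_iff.1 hA0).1 (by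
    rw [← ENNReal.toReal_le_toReal (measure_ne_top ν A) (by finiteness), ENNReal.toReal_div]
    exact hA2)
  have := ENNReal.toReal_strict_mono (measure_ne_top ν _) this
  rwa [ENNReal.toReal_mul, ENNReal.toReal_add ENNReal.one_ne_top ENNReal.ofReal_ne_top,
    ENNReal.toReal_ofReal hc, ENNReal.toReal_one] at this

variable [MeasurableConstSMul Γ X]

theorem ExpandsOn.mul_measureReal_sdiff_finSMul_le [IsFiniteMeasure ν] {Y A : Set X} {c : ℝ}
    {S : Finset Γ} (h : ExpandsOn ν Y c S) (hc : 0 ≤ c) (hY : MeasurableSet Y) (hS : SymmFin S)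
    (hA : MeasurableSet A) (hA2 : ν.real (Y \ A) ≤ ν.real Y / 2) :
    (1 + c) * ν.real (Y \ finSMul S A) ≤ ν.real (Y \ A) := by
  have hC : Y \ finSMul S A ⊆ Y \ A := Set.sdiff_subset_sdiff_right (subset_finSMul hS.1 A)
  rcases measureReal_nonneg.eq_or_lt with h0 | h0
  · rw [← h0, mul_zero]
    exact measureReal_nonneg
  refine (h.mul_measureReal_lt hc (hY.diff (hA.finSMul S)) Set.sdiff_subset h0
    ((measureReal_mono hC).trans hA2)).le.trans (measureReal_mono ?_)
  -- by symmetry of `S`, the translates of `Y \ S·A` miss `A`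
  have hdisj := hS.disjoint_finSMul_left.2 (Set.disjoint_sdiff_left (t := Y) (s := finSMul S A))
  exact fun x hx => ⟨hx.2, Set.disjoint_left.1 hdisj hx.1⟩

variable [IsProbabilityMeasure ν]

theorem ExpandsOn.asymExpandsOn_univ {Y : Set X} {S : Finset Γ} (h : ExpandsOn ν Y (1 / 2) S)
    (hY : MeasurableSet Y) (hS : SymmFin S) {α : ℝ} (hα : 0 < α) (hYα : 8 * (1 - ν.real Y) ≤ α) :
    AsymExpandsOn ν Set.univ α (1 / 4) S := by
  intro A hA _ hαA hA2
  rw [measure_univ, mul_one] at hαA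
  rw [measure_univ] at hA2
  rw [Set.inter_univ]
  have hαA' : α ≤ ν.real A := (ENNReal.ofReal_le_iff_le_toReal (measure_ne_top ν A)).1 hαA
  have hA2' : ν.real A ≤ 1 / 2 := by
    simpa [measureReal_def] using ENNReal.toReal_mono (by simp) hA2
  suffices hreal : (1 + 1 / 4) * ν.real A < ν.real (finSMul S A) by
    rw [← ofReal_measureReal, ← ofReal_measureReal, ← ENNReal.ofReal_one,
      ← ENNReal.ofReal_add zero_le_one (by norm_num), ← ENNReal.ofReal_mul (by norm_num)]
    exact ENNReal.ofReal_lt_ofReal_iff'.2 ⟨hreal, (by positivity : (0 : ℝ) ≤ _).trans_lt hreal⟩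
  have hAY := measureReal_inter_add_sdiff (μ := ν) (s := A) hY
  have hAYc : ν.real (A \ Y) ≤ ν.real Yᶜ := measureReal_mono (Set.sdiff_subset_compl A Y)
  have hYA := measureReal_inter_add_sdiff (μ := ν) (s := Y) hA
  rw [Set.inter_comm] at hYA
  have hYc := probReal_compl_eq_one_sub (μ := ν) hY
  rcases le_or_gt (ν.real (A ∩ Y)) (ν.real Y / 2) with hle | hgt
  · have hexp := h.mul_measureReal_lt (by norm_num) (hA.inter hY) Set.inter_subset_right
      (by linarith) hle
    have hsub : ν.real (finSMul S (A ∩ Y) ∩ Y) ≤ ν.real (finSMul S A) :=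
      measureReal_mono (Set.inter_subset_left.trans (finSMul_mono le_rfl Set.inter_subset_left))
    linarith
  · have hexp := h.mul_measureReal_sdiff_finSMul_le (by norm_num) hY hS hA (by linarith)
    have hYSA := measureReal_inter_add_sdiff (μ := ν) (s := Y) (hA.finSMul S)
    have hsub : ν.real (Y ∩ finSMul S A) ≤ ν.real (finSMul S A) :=
      measureReal_mono Set.inter_subset_right
    linarith

theorem asymExpDomain_of_exhaustion {Y : ℕ → Set X} {S : ℕ → Finset Γ} (hmono : Monotone Y)
    (hY : ∀ n, MeasurableSet (Y n)) (hnull : ν (Set.univ \ ⋃ n, Y n) = 0)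
    (hS : ∀ n, SymmFin (S n)) (hYS : ∀ n, ExpandsOn ν (Y n) (1 / 2) (S n)) :
    AsymExpDomain Γ ν Set.univ := by
  intro α hα _
  have hlim : Tendsto (fun n => ν.real (Y n)) atTop (𝓝 1) := by
    have := tendsto_measure_iUnion_atTop (μ := ν) hmono
    rw [(prob_compl_eq_zero_iff (.iUnion hY)).1 (by rwa [Set.compl_eq_univ_sdiff])] at this
    exact (ENNReal.tendsto_toReal ENNReal.one_ne_top).comp this
  obtain ⟨n, hn⟩ := (hlim.eventually (lt_mem_nhds (by linarith : 1 - α / 8 < 1))).exists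
  exact ⟨1 / 4, by norm_num, S n, hS n,
    (hYS n).asymExpandsOn_univ (hY n) (hS n) hα (by linarith)⟩

end Converse

theorem quantitative_structure_theorem_general
    {Γ X : Type*} [Group Γ] [MulAction Γ X] [MeasurableSpace X]
    (ν : Measure X) [IsProbabilityMeasure ν]
    (hmeas : ∀ γ : Γ, Measurable fun x : X => γ • x) :
    AsymExpDomain Γ ν Set.univ ↔
      ∀ c : ℝ, 0 < c → c < 1 →
        ∃ (Yseq : ℕ → Set X) (S : ℕ → Finset Γ),
          Monotone Yseq ∧ (∀ n, MeasurableSet (Yseq n)) ∧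
          ν (Set.univ \ ⋃ n, Yseq n) = 0 ∧
          ∀ n, SymmFin (S n) ∧ 0 < ν (Yseq n) ∧ ExpandsOn ν (Yseq n) c (S n) := by
  classical
  have : MeasurableConstSMul Γ X := ⟨hmeas⟩
  refine ⟨fun h c hc hc1 => h.exists_exhaustion hc hc1, fun h => ?_⟩
  obtain ⟨Y, S, hmono, hY, hnull, hYS⟩ := h (1 / 2) (by norm_num) (by norm_num)
  exact asymExpDomain_of_exhaustion hmono hY hnull (fun n => (hYS n).1) fun n => (hYS n).2.2

/-- Corollary 4.7: a measurable action on a probability space is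
asymptotically expanding in measure iff for every `c ∈ (0,1)` there is an exhaustion of
`X` by domains of `(c,S_n)`-expansion. -/
theorem quantitative_structure_theorem
    {Γ X : Type*} [Group Γ] [Countable Γ] [MulAction Γ X] [MeasurableSpace X]
    (ν : Measure X) [IsProbabilityMeasure ν]
    (hmeas : ∀ γ : Γ, Measurable fun x : X => γ • x) :
    AsymExpDomain Γ ν Set.univ ↔
      ∀ c : ℝ, 0 < c → c < 1 →
        ∃ (Yseq : ℕ → Set X) (S : ℕ → Finset Γ),
          Monotone Yseq ∧ (∀ n, MeasurableSet (Yseq n)) ∧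
          ν (Set.univ \ ⋃ n, Yseq n) = 0 ∧
          ∀ n, SymmFin (S n) ∧ 0 < ν (Yseq n) ∧ ExpandsOn ν (Yseq n) c (S n) :=
  quantitative_structure_theorem_general ν hmeas
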